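/- arXiv:math-ph/0401057 — 5 statements merged into one kernel-verified Lean document; each statement's English description precedes it below -/
import Mathlib

section
/- The function u(x,y) = ln( X'(x) Y'(y) / (X(x)+Y(y))^2 ) satisfies the Liouville equation u_{xy} = 2 exp(u), for any smooth functions X, Y with X' > 0, Y' > 0 and X + Y > 0. -/
theorem liouville_solution
    (X Y : ℝ → ℝ) (hX : ContDiff ℝ (⊤ : ℕ∞) X) (hY : ContDiff ℝ (⊤ : ℕ∞) Y)
    (hX' : ∀ x, deriv X x > 0) (hY' : ∀ y, deriv Y y > 0)
    (hsum : ∀ x y, X x + Y y > 0)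
    (u : ℝ → ℝ → ℝ)
    (hu : ∀ x y, u x y = Real.log (deriv X x * deriv Y y / (X x + Y y) ^ 2)) :
    ∀ x y, deriv (fun x' => deriv (fun y' => u x' y') y) x = 2 * Real.exp (u x y) := by
  intro x y
  obtain ⟨hXdiff, hX2⟩ := contDiff_infty_iff_deriv.mp (hX.of_le (by simp))
  obtain ⟨hX'diff, _⟩ := contDiff_infty_iff_deriv.mp hX2
  obtain ⟨hYdiff, hY2⟩ := contDiff_infty_iff_deriv.mp (hY.of_le (by simp))
  obtain ⟨hY'diff, _⟩ := contDiff_infty_iff_deriv.mp hY2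
  have key : ∀ x' : ℝ, deriv (fun y' => u x' y') y
      = deriv (deriv Y) y / deriv Y y - 2 * (deriv Y y / (X x' + Y y)) := by
    intro x'
    have hfun : (fun y' => u x' y') = fun y' =>
        Real.log (deriv X x') + Real.log (deriv Y y') - 2 * Real.log (X x' + Y y') := by
      funext y'
      rw [hu]
      have h1 : deriv X x' * deriv Y y' ≠ 0 := (mul_pos (hX' x') (hY' y')).ne'
      have h2 : (X x' + Y y') ^ 2 ≠ 0 := pow_ne_zero 2 (hsum x' y').ne'
      rw [Real.log_div h1 h2, Real.log_mul (ne_of_gt (hX' x')) (ne_of_gt (hY' y')),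
        Real.log_pow]
      push_cast; ring
    rw [hfun]
    have h1 : HasDerivAt (fun y' => Real.log (deriv Y y')) (deriv (deriv Y) y / deriv Y y) y :=
      ((hY'diff y).hasDerivAt).log (ne_of_gt (hY' y))
    have h2 : HasDerivAt (fun y' => Real.log (X x' + Y y')) (deriv Y y / (X x' + Y y)) y := by
      have h0 : HasDerivAt (fun y' => X x' + Y y') (deriv Y y) y :=
        (hYdiff y).hasDerivAt.const_add _
      exact h0.log (ne_of_gt (hsum x' y))
    have H := (show HasDerivAt (fun y' => Real.log (deriv X x') + Real.log (deriv Y y') - 2 * Real.log (X x' + Y y'))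
      (0 + deriv (deriv Y) y / deriv Y y - 2 * (deriv Y y / (X x' + Y y))) y from
      ((hasDerivAt_const y (Real.log (deriv X x'))).add h1).sub
      (h2.const_mul 2)).deriv
    simpa using H
  have hrw : (fun x' => deriv (fun y' => u x' y') y)
      = fun x' => deriv (deriv Y) y / deriv Y y - 2 * (deriv Y y / (X x' + Y y)) := by
    funext x'; exact key x'
  rw [hrw]
  have h3 : HasDerivAt (fun x' => X x' + Y y) (deriv X x) x :=
    (hXdiff x).hasDerivAt.add_const _
  have h4 : HasDerivAt (fun x' => deriv Y y / (X x' + Y y))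
      ((0 * (X x + Y y) - deriv Y y * deriv X x) / (X x + Y y) ^ 2) x :=
    (hasDerivAt_const x (deriv Y y)).div h3 (ne_of_gt (hsum x y))
  have H := (show HasDerivAt (fun x' => deriv (deriv Y) y / deriv Y y - 2 * (deriv Y y / (X x' + Y y)))
    (0 - 2 * ((0 * (X x + Y y) - deriv Y y * deriv X x) / (X x + Y y) ^ 2)) x from
    (hasDerivAt_const x (deriv (deriv Y) y / deriv Y y)).sub
    (h4.const_mul 2)).deriv
  rw [H, hu, Real.exp_log (div_pos (mul_pos (hX' x) (hY' y)) (pow_pos (hsum x y) 2))]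
  have hne : (X x + Y y) ≠ 0 := ne_of_gt (hsum x y)
  field_simp
  ring
end

section
/- The function w(x,y) = X₁'(x)/X'(x) + Y₁'(y)/Y'(y) - 2 (X₁(x)+Y₁(y))/(X(x)+Y(y)) satisfies the Moutard equation w_{xy} = 2 X'(x) Y'(y) / (X(x)+Y(y))^2 · w, where X₁ = f·X', Y₁ = g·Y' for smooth f, g, assuming X'(x) ≠ 0, Y'(y) ≠ 0, X(x)+Y(y) ≠ 0. -/
theorem moutard_solution
    (X Y f g : ℝ → ℝ) (hX : ContDiff ℝ (⊤ : ℕ∞) X) (hY : ContDiff ℝ (⊤ : ℕ∞) Y)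
    (hf : ContDiff ℝ (⊤ : ℕ∞) f) (hg : ContDiff ℝ (⊤ : ℕ∞) g)
    (hX' : ∀ x, deriv X x ≠ 0) (hY' : ∀ y, deriv Y y ≠ 0)
    (hsum : ∀ x y, X x + Y y ≠ 0)
    (X₁ Y₁ : ℝ → ℝ)
    (hX₁ : ∀ x, X₁ x = f x * deriv X x) (hY₁ : ∀ y, Y₁ y = g y * deriv Y y)
    (w : ℝ → ℝ → ℝ)
    (hw : ∀ x y, w x y = deriv X₁ x / deriv X x + deriv Y₁ y / deriv Y y
        - 2 * (X₁ x + Y₁ y) / (X x + Y y)) :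
    ∀ x y, deriv (fun x' => deriv (fun y' => w x' y') y) x
      = 2 * deriv X x * deriv Y y / (X x + Y y) ^ 2 * w x y := by
  have hXi : ContDiff ℝ ((⊤:ℕ∞):WithTop ℕ∞) X := hX.of_le (by simp)
  have hYi : ContDiff ℝ ((⊤:ℕ∞):WithTop ℕ∞) Y := hY.of_le (by simp)
  have hfi : ContDiff ℝ ((⊤:ℕ∞):WithTop ℕ∞) f := hf.of_le (by simp)
  have hgi : ContDiff ℝ ((⊤:ℕ∞):WithTop ℕ∞) g := hg.of_le (by simp)
  have hX₁e : X₁ = fun x => f x * deriv X x := funext hX₁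
  have hY₁e : Y₁ = fun y => g y * deriv Y y := funext hY₁
  have hXd := (contDiff_infty_iff_deriv.mp hXi).2
  have hYd := (contDiff_infty_iff_deriv.mp hYi).2
  have hX₁s : ContDiff ℝ ((⊤:ℕ∞):WithTop ℕ∞) X₁ := by rw [hX₁e]; exact hfi.mul hXd
  have hY₁s : ContDiff ℝ ((⊤:ℕ∞):WithTop ℕ∞) Y₁ := by rw [hY₁e]; exact hgi.mul hYd
  have hX₁d := (contDiff_infty_iff_deriv.mp hX₁s).2
  have hY₁d := (contDiff_infty_iff_deriv.mp hY₁s).2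
  intro x y
  set K : ℝ := (deriv (deriv Y₁) y * deriv Y y - deriv Y₁ y * deriv (deriv Y) y)
      / (deriv Y y) ^ 2 with hK
  have inner : ∀ x', deriv (fun y' => w x' y') y
      = K - (2 * deriv Y₁ y * (X x' + Y y) - 2 * (X₁ x' + Y₁ y) * deriv Y y)
          / (X x' + Y y) ^ 2 := by
    intro x'
    have h1 : HasDerivAt (fun y' => deriv Y₁ y' / deriv Y y') K y :=
      ((hY₁d.differentiable (by simp) y).hasDerivAt).div
        ((hYd.differentiable (by simp) y).hasDerivAt) (hY' y)
    have h2 : HasDerivAt (fun y' => 2 * (X₁ x' + Y₁ y') / (X x' + Y y'))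
        ((2 * deriv Y₁ y * (X x' + Y y) - 2 * (X₁ x' + Y₁ y) * deriv Y y)
          / (X x' + Y y) ^ 2) y := by
      have hnum : HasDerivAt (fun y' => 2 * (X₁ x' + Y₁ y')) (2 * deriv Y₁ y) y :=
        (((hY₁s.differentiable (by simp) y).hasDerivAt).const_add (X₁ x')).const_mul 2
      have hden : HasDerivAt (fun y' => X x' + Y y') (deriv Y y) y :=
        ((hY.differentiable (by simp) y).hasDerivAt).const_add (X x')
      exact hnum.div hden (hsum x' y)
    have heq : (fun y' => w x' y')
        = fun y' => deriv X₁ x' / deriv X x' + deriv Y₁ y' / deriv Y y'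
            - 2 * (X₁ x' + Y₁ y') / (X x' + Y y') := funext fun y' => hw x' y'
    rw [heq]
    exact ((h1.const_add (deriv X₁ x' / deriv X x')).sub h2).deriv
  have outer_eq : (fun x' => deriv (fun y' => w x' y') y)
      = fun x' => K - (2 * deriv Y₁ y * (X x' + Y y) - 2 * (X₁ x' + Y₁ y) * deriv Y y)
          / (X x' + Y y) ^ 2 := funext inner
  rw [outer_eq]
  have hA : HasDerivAt (fun x' => X x' + Y y) (deriv X x) x :=
    ((hX.differentiable (by simp) x).hasDerivAt).add_const (Y y)
  have hB : HasDerivAt (fun x' => X₁ x' + Y₁ y) (deriv X₁ x) x :=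
    ((hX₁s.differentiable (by simp) x).hasDerivAt).add_const (Y₁ y)
  have hnum : HasDerivAt
      (fun x' => 2 * deriv Y₁ y * (X x' + Y y) - 2 * (X₁ x' + Y₁ y) * deriv Y y)
      (2 * deriv Y₁ y * deriv X x - 2 * deriv X₁ x * deriv Y y) x := by
    have t1 := hA.const_mul (2 * deriv Y₁ y)
    have t2 := (hB.const_mul 2).mul_const (deriv Y y)
    exact t1.sub t2
  have hden := hA.pow 2
  have hquot := hnum.div hden (pow_ne_zero 2 (hsum x y))
  have hfull := hquot.const_sub K
  have hfd := hfull.deriv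
  simp only [Pi.div_apply, Pi.pow_apply] at hfd
  rw [hfd, hw x y]
  have hD := hsum x y
  have hXx := hX' x
  have hYy := hY' y
  field_simp
  ring
end

section
/- Let φ₁, φ₂ : ℝ → ℝ satisfy φ₂' = A - λ + λ₁ φ₂ and -φ₁' = 2(B + λ φ₂). Then u(t,x) = φ₂(t) - √(φ₁(t) - 2x) satisfies the PDE u_t = (A/u_x³ + B/u_x²) u_{xx} + λ u u_x + λ₁ (u + 1/u_x) on the domain where φ₁(t) - 2x > 0. -/
theorem ansatz_reduction
    (A B lam lam₁ : ℝ) (φ₁ φ₂ : ℝ → ℝ)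
    (hφ₁ : ContDiff ℝ (⊤ : ℕ∞) φ₁) (hφ₂ : ContDiff ℝ (⊤ : ℕ∞) φ₂)
    (heq2 : ∀ t, deriv φ₂ t = A - lam + lam₁ * φ₂ t)
    (heq1 : ∀ t, -deriv φ₁ t = 2 * (B + lam * φ₂ t))
    (u : ℝ → ℝ → ℝ)
    (hu : ∀ t x, u t x = φ₂ t - Real.sqrt (φ₁ t - 2 * x)) :
    ∀ t x, φ₁ t - 2 * x > 0 →
      deriv (fun t' => u t' x) t
        = (A / (deriv (fun x' => u t x') x) ^ 3
            + B / (deriv (fun x' => u t x') x) ^ 2)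
            * deriv (deriv (fun x' => u t x')) x
          + lam * u t x * deriv (fun x' => u t x') x
          + lam₁ * (u t x + (deriv (fun x' => u t x') x)⁻¹) := by
  intro t x hs
  have hfun : (fun x' => u t x') = fun x' => φ₂ t - Real.sqrt (φ₁ t - 2 * x') :=
    funext fun x' => hu t x'
  have hfunt : (fun t' => u t' x) = fun t' => φ₂ t' - Real.sqrt (φ₁ t' - 2 * x) :=
    funext fun t' => hu t' x
  have hsq : (0:ℝ) < Real.sqrt (φ₁ t - 2 * x) := Real.sqrt_pos.mpr hs
  have hsqne : Real.sqrt (φ₁ t - 2 * x) ≠ 0 := ne_of_gt hsq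
  have hsq2 : Real.sqrt (φ₁ t - 2 * x) ^ 2 = φ₁ t - 2 * x := Real.sq_sqrt hs.le
  -- first x-derivative at any point y with positivity
  have hderiv : ∀ y : ℝ, φ₁ t - 2 * y > 0 →
      HasDerivAt (fun x' => φ₂ t - Real.sqrt (φ₁ t - 2 * x'))
        (Real.sqrt (φ₁ t - 2 * y))⁻¹ y := by
    intro y hy
    have h1 : HasDerivAt (fun x' : ℝ => φ₁ t - 2 * x') (-2) y := by
      simpa using (((hasDerivAt_id y).const_mul 2).const_sub (φ₁ t))
    have h2 := h1.sqrt (ne_of_gt hy)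
    have h3 := (hasDerivAt_const y (φ₂ t)).sub h2
    have hyne : Real.sqrt (φ₁ t - 2 * y) ≠ 0 := ne_of_gt (Real.sqrt_pos.mpr hy)
    have : 0 - -2 / (2 * Real.sqrt (φ₁ t - 2 * y)) = (Real.sqrt (φ₁ t - 2 * y))⁻¹ := by
      field_simp
      ring
    rwa [this] at h3
  have hux : deriv (fun x' => u t x') x = (Real.sqrt (φ₁ t - 2 * x))⁻¹ := by
    rw [hfun]; exact (hderiv x hs).deriv
  -- second x-derivative
  have hopen : ∀ᶠ y in nhds x, φ₁ t - 2 * y > 0 := by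
    have hO : IsOpen {y : ℝ | 0 < φ₁ t - 2 * y} :=
      isOpen_lt continuous_const (by continuity)
    exact hO.mem_nhds hs
  have hev : deriv (fun x' => u t x') =ᶠ[nhds x]
      fun y => (Real.sqrt (φ₁ t - 2 * y))⁻¹ := by
    filter_upwards [hopen] with y hy
    rw [hfun]; exact (hderiv y hy).deriv
  have huxx : deriv (deriv (fun x' => u t x')) x
      = (Real.sqrt (φ₁ t - 2 * x))⁻¹ / (φ₁ t - 2 * x) := by
    rw [hev.deriv_eq]
    have h1 : HasDerivAt (fun x' : ℝ => φ₁ t - 2 * x') (-2) x := by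
      simpa using (((hasDerivAt_id x).const_mul 2).const_sub (φ₁ t))
    have h2 := h1.sqrt (ne_of_gt hs)
    have h3 := h2.inv hsqne
    have := h3.deriv
    rw [show deriv (fun y => (Real.sqrt (φ₁ t - 2 * y))⁻¹) x = _ from this, hsq2]
    field_simp
  -- t-derivative
  have hut : deriv (fun t' => u t' x) t
      = deriv φ₂ t - deriv φ₁ t / (2 * Real.sqrt (φ₁ t - 2 * x)) := by
    rw [hfunt]
    have h1 : HasDerivAt (fun t' : ℝ => φ₁ t' - 2 * x) (deriv φ₁ t) t := by
      exact ((hφ₁.differentiable (by simp)).differentiableAt.hasDerivAt.sub_const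
        (2 * x))
    have h2 := h1.sqrt (ne_of_gt hs)
    have h3 := ((hφ₂.differentiable (by simp)).differentiableAt.hasDerivAt.sub h2)
    exact h3.deriv
  rw [hut, hux, huxx, hu t x, heq2 t]
  have hφ1' : deriv φ₁ t = -(2 * (B + lam * φ₂ t)) := by
    have := heq1 t; linarith
  rw [hφ1']
  rw [inv_inv]
  rw [show φ₁ t - 2 * x = Real.sqrt (φ₁ t - 2 * x) ^ 2 from hsq2.symm]
  field_simp
  simp only [Real.sqrt_sq hsq.le]
  ring
end

section
/- The explicit function u(t,x) = C e^{λ₁ t} - (A-λ)/λ₁ - √(2((A-λ)λ/λ₁ - B)t - 2λ C e^{λ₁ t}/λ₁ + C₁ - 2x) satisfies the equation u_t = (A/u_x³ + B/u_x²) u_{xx} + λ u u_x + λ₁ (u + 1/u_x) wherever the expression under the square root is positive. -/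
theorem explicit_solution
    (A B lam lam₁ C C₁ : ℝ) (hlam₁ : lam₁ ≠ 0)
    (u : ℝ → ℝ → ℝ)
    (hu : ∀ t x, u t x = C * Real.exp (lam₁ * t) - (A - lam) / lam₁
        - Real.sqrt (2 * ((A - lam) * lam / lam₁ - B) * t
            - 2 * lam * C * Real.exp (lam₁ * t) / lam₁ + C₁ - 2 * x)) :
    ∀ t x, 2 * ((A - lam) * lam / lam₁ - B) * t
        - 2 * lam * C * Real.exp (lam₁ * t) / lam₁ + C₁ - 2 * x > 0 →
      deriv (fun t' => u t' x) t
        = (A / (deriv (fun x' => u t x') x) ^ 3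
            + B / (deriv (fun x' => u t x') x) ^ 2)
            * deriv (deriv (fun x' => u t x')) x
          + lam * u t x * deriv (fun x' => u t x') x
          + lam₁ * (u t x + (deriv (fun x' => u t x') x)⁻¹) := by
  intro t x hpos
  have hne : (2 * ((A - lam) * lam / lam₁ - B) * t
      - 2 * lam * C * Real.exp (lam₁ * t) / lam₁ + C₁ - 2 * x) ≠ 0 := ne_of_gt hpos
  have hs : 0 < Real.sqrt (2 * ((A - lam) * lam / lam₁ - B) * t
      - 2 * lam * C * Real.exp (lam₁ * t) / lam₁ + C₁ - 2 * x) := Real.sqrt_pos.mpr hpos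
  have hsne : Real.sqrt (2 * ((A - lam) * lam / lam₁ - B) * t
      - 2 * lam * C * Real.exp (lam₁ * t) / lam₁ + C₁ - 2 * x) ≠ 0 := ne_of_gt hs
  -- derivative of the inside in x
  have hgd : ∀ x' : ℝ, HasDerivAt (fun x'' : ℝ => 2 * ((A - lam) * lam / lam₁ - B) * t
      - 2 * lam * C * Real.exp (lam₁ * t) / lam₁ + C₁ - 2 * x'') (-2) x' := by
    intro x'
    simpa using (((hasDerivAt_id x').const_mul (2:ℝ)).const_sub
      (2 * ((A - lam) * lam / lam₁ - B) * t
        - 2 * lam * C * Real.exp (lam₁ * t) / lam₁ + C₁))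
  -- x-derivative of u at any point with positive inside
  have hux : ∀ x' : ℝ, 0 < (2 * ((A - lam) * lam / lam₁ - B) * t
      - 2 * lam * C * Real.exp (lam₁ * t) / lam₁ + C₁ - 2 * x') →
      HasDerivAt (fun x'' => u t x'')
        ((Real.sqrt (2 * ((A - lam) * lam / lam₁ - B) * t
          - 2 * lam * C * Real.exp (lam₁ * t) / lam₁ + C₁ - 2 * x'))⁻¹) x' := by
    intro x' h'
    have hsq := (hgd x').sqrt (ne_of_gt h')
    have h1 := (hasDerivAt_const x' (C * Real.exp (lam₁ * t) - (A - lam) / lam₁)).sub hsq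
    have heq : (fun x'' => u t x'') = fun x'' => C * Real.exp (lam₁ * t) - (A - lam) / lam₁
        - Real.sqrt (2 * ((A - lam) * lam / lam₁ - B) * t
          - 2 * lam * C * Real.exp (lam₁ * t) / lam₁ + C₁ - 2 * x'') :=
      funext fun x'' => hu t x''
    rw [heq]
    have hs' : Real.sqrt (2 * ((A - lam) * lam / lam₁ - B) * t
        - 2 * lam * C * Real.exp (lam₁ * t) / lam₁ + C₁ - 2 * x') ≠ 0 :=
      ne_of_gt (Real.sqrt_pos.mpr h')
    have hval : (0 : ℝ) - (-2 / (2 * Real.sqrt (2 * ((A - lam) * lam / lam₁ - B) * t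
        - 2 * lam * C * Real.exp (lam₁ * t) / lam₁ + C₁ - 2 * x')))
        = (Real.sqrt (2 * ((A - lam) * lam / lam₁ - B) * t
          - 2 * lam * C * Real.exp (lam₁ * t) / lam₁ + C₁ - 2 * x'))⁻¹ := by
      set s := Real.sqrt (2 * ((A - lam) * lam / lam₁ - B) * t
        - 2 * lam * C * Real.exp (lam₁ * t) / lam₁ + C₁ - 2 * x') with hsdef
      field_simp
      ring
    exact hval ▸ h1
  have hd1 : deriv (fun x' => u t x') x = (Real.sqrt (2 * ((A - lam) * lam / lam₁ - B) * t
      - 2 * lam * C * Real.exp (lam₁ * t) / lam₁ + C₁ - 2 * x))⁻¹ := (hux x hpos).deriv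
  -- second x-derivative
  have hopen : IsOpen {x' : ℝ | 0 < 2 * ((A - lam) * lam / lam₁ - B) * t
      - 2 * lam * C * Real.exp (lam₁ * t) / lam₁ + C₁ - 2 * x'} := by
    apply isOpen_lt continuous_const
    fun_prop
  have hev : (fun x' => deriv (fun x'' => u t x'') x') =ᶠ[nhds x]
      (fun x' => (Real.sqrt (2 * ((A - lam) * lam / lam₁ - B) * t
        - 2 * lam * C * Real.exp (lam₁ * t) / lam₁ + C₁ - 2 * x'))⁻¹) := by
    filter_upwards [hopen.mem_nhds hpos] with x' h'
    exact (hux x' h').deriv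
  have hd2 : deriv (deriv (fun x' => u t x')) x
      = -(-2 / (2 * Real.sqrt (2 * ((A - lam) * lam / lam₁ - B) * t
          - 2 * lam * C * Real.exp (lam₁ * t) / lam₁ + C₁ - 2 * x)))
        / (Real.sqrt (2 * ((A - lam) * lam / lam₁ - B) * t
          - 2 * lam * C * Real.exp (lam₁ * t) / lam₁ + C₁ - 2 * x)) ^ 2 := by
    rw [hev.deriv_eq]
    exact (((hgd x).sqrt hne).inv hsne).deriv
  -- t-derivative
  have hEt : HasDerivAt (fun t' => Real.exp (lam₁ * t')) (Real.exp (lam₁ * t) * lam₁) t := by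
    simpa using ((hasDerivAt_id t).const_mul lam₁).exp
  have hgt : HasDerivAt (fun t' => 2 * ((A - lam) * lam / lam₁ - B) * t'
      - 2 * lam * C * Real.exp (lam₁ * t') / lam₁ + C₁ - 2 * x)
      (2 * ((A - lam) * lam / lam₁ - B)
        - 2 * lam * C * (Real.exp (lam₁ * t) * lam₁) / lam₁) t := by
    have h1 : HasDerivAt (fun t' : ℝ => 2 * ((A - lam) * lam / lam₁ - B) * t')
        (2 * ((A - lam) * lam / lam₁ - B)) t := by
      simpa using (hasDerivAt_id t).const_mul (2 * ((A - lam) * lam / lam₁ - B))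
    have h2 := (hEt.const_mul (2 * lam * C)).div_const lam₁
    simpa using ((h1.sub h2).add_const C₁).sub_const (2 * x)
  have hsqt := hgt.sqrt hne
  have hdt0 := ((hEt.const_mul C).sub_const ((A - lam) / lam₁)).sub hsqt
  have hudt : deriv (fun t' => u t' x) t
      = C * (Real.exp (lam₁ * t) * lam₁)
        - (2 * ((A - lam) * lam / lam₁ - B)
            - 2 * lam * C * (Real.exp (lam₁ * t) * lam₁) / lam₁)
          / (2 * Real.sqrt (2 * ((A - lam) * lam / lam₁ - B) * t
            - 2 * lam * C * Real.exp (lam₁ * t) / lam₁ + C₁ - 2 * x)) := by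
    have heq : (fun t' => u t' x) = fun t' => C * Real.exp (lam₁ * t') - (A - lam) / lam₁
        - Real.sqrt (2 * ((A - lam) * lam / lam₁ - B) * t'
          - 2 * lam * C * Real.exp (lam₁ * t') / lam₁ + C₁ - 2 * x) :=
      funext fun t' => hu t' x
    rw [heq]
    exact hdt0.deriv
  rw [hudt, hd1, hd2, hu t x]
  set E := Real.exp (lam₁ * t) with hEdef
  set s := Real.sqrt (2 * ((A - lam) * lam / lam₁ - B) * t
      - 2 * lam * C * E / lam₁ + C₁ - 2 * x) with hsdef
  field_simp
  ring
end

section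
/- Suppose f(t,x) satisfies the KdV equation f_t + f_{xxx} - 6 f f_x = 0, and u(t,x) > 0 satisfies the Schrödinger equation u_{xx} = f u for all t, x. Then the function w = u_t + u_{xxx} - 3 u_{xx} u_x / u + α(t) u satisfies w_{xx} = f w (i.e., the operator Q₁ maps solutions of u_{xx}=fu to solutions of the same linear equation). -/
open Function

noncomputable def D1 (F : ℝ → ℝ → ℝ) : ℝ → ℝ → ℝ := fun t x => deriv (fun s => F s x) t
noncomputable def D2 (F : ℝ → ℝ → ℝ) : ℝ → ℝ → ℝ := fun t x => deriv (F t) x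

lemma slice_x {F : ℝ → ℝ → ℝ} (hF : ContDiff ℝ (⊤ : ℕ∞) (uncurry F)) (t : ℝ) :
    ContDiff ℝ (⊤ : ℕ∞) (F t) := hF.comp (contDiff_const.prodMk contDiff_id)

lemma slice_t {F : ℝ → ℝ → ℝ} (hF : ContDiff ℝ (⊤ : ℕ∞) (uncurry F)) (x : ℝ) :
    ContDiff ℝ (⊤ : ℕ∞) (fun t => F t x) := hF.comp (contDiff_id.prodMk contDiff_const)

lemma hasDerivAt_t {F : ℝ → ℝ → ℝ} (hF : ContDiff ℝ (⊤ : ℕ∞) (uncurry F)) (t x : ℝ) :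
    HasDerivAt (fun s => F s x) (fderiv ℝ (uncurry F) (t, x) (1, 0)) t := by
  have h1 : HasFDerivAt (uncurry F) (fderiv ℝ (uncurry F) (t, x)) (t, x) :=
    (hF.differentiable (by simp) (t, x)).hasFDerivAt
  have h2 : HasDerivAt (fun s : ℝ => (s, x)) ((1 : ℝ), (0 : ℝ)) t := by
    simpa using HasDerivAt.prodMk (hasDerivAt_id t) (hasDerivAt_const t x)
  exact h1.comp_hasDerivAt t h2

lemma hasDerivAt_x {F : ℝ → ℝ → ℝ} (hF : ContDiff ℝ (⊤ : ℕ∞) (uncurry F)) (t x : ℝ) :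
    HasDerivAt (F t) (fderiv ℝ (uncurry F) (t, x) (0, 1)) x := by
  have h1 : HasFDerivAt (uncurry F) (fderiv ℝ (uncurry F) (t, x)) (t, x) :=
    (hF.differentiable (by simp) (t, x)).hasFDerivAt
  have h2 : HasDerivAt (fun y : ℝ => (t, y)) ((0 : ℝ), (1 : ℝ)) x := by
    simpa using HasDerivAt.prodMk (hasDerivAt_const x t) (hasDerivAt_id x)
  exact h1.comp_hasDerivAt x h2

lemma D1_eq {F : ℝ → ℝ → ℝ} (hF : ContDiff ℝ (⊤ : ℕ∞) (uncurry F)) (t x : ℝ) :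
    D1 F t x = fderiv ℝ (uncurry F) (t, x) (1, 0) := (hasDerivAt_t hF t x).deriv

lemma D2_eq {F : ℝ → ℝ → ℝ} (hF : ContDiff ℝ (⊤ : ℕ∞) (uncurry F)) (t x : ℝ) :
    D2 F t x = fderiv ℝ (uncurry F) (t, x) (0, 1) := (hasDerivAt_x hF t x).deriv

lemma contDiff_applied {F : ℝ → ℝ → ℝ} (hF : ContDiff ℝ (⊤ : ℕ∞) (uncurry F)) (v : ℝ × ℝ) :
    ContDiff ℝ (⊤ : ℕ∞) (fun p : ℝ × ℝ => fderiv ℝ (uncurry F) p v) := by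
  exact (ContinuousLinearMap.apply ℝ ℝ v).contDiff.comp (hF.fderiv_right (by simp))

lemma D1_smooth {F : ℝ → ℝ → ℝ} (hF : ContDiff ℝ (⊤ : ℕ∞) (uncurry F)) :
    ContDiff ℝ (⊤ : ℕ∞) (uncurry (D1 F)) := by
  have : uncurry (D1 F) = fun p : ℝ × ℝ => fderiv ℝ (uncurry F) p (1, 0) := by
    funext p
    exact D1_eq hF p.1 p.2
  rw [this]; exact contDiff_applied hF _

lemma D2_smooth {F : ℝ → ℝ → ℝ} (hF : ContDiff ℝ (⊤ : ℕ∞) (uncurry F)) :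
    ContDiff ℝ (⊤ : ℕ∞) (uncurry (D2 F)) := by
  have : uncurry (D2 F) = fun p : ℝ × ℝ => fderiv ℝ (uncurry F) p (0, 1) := by
    funext p
    exact D2_eq hF p.1 p.2
  rw [this]; exact contDiff_applied hF _

lemma fderiv_applied {F : ℝ → ℝ → ℝ} (hF : ContDiff ℝ (⊤ : ℕ∞) (uncurry F)) (v p w : ℝ × ℝ) :
    fderiv ℝ (fun q : ℝ × ℝ => fderiv ℝ (uncurry F) q v) p w
      = fderiv ℝ (fderiv ℝ (uncurry F)) p w v := by
  have hd : HasFDerivAt (fderiv ℝ (uncurry F)) (fderiv ℝ (fderiv ℝ (uncurry F)) p) p :=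
    ((hF.fderiv_right (by exact WithTop.coe_le_coe.mpr le_top)).differentiable one_ne_zero p).hasFDerivAt
  have h := ((ContinuousLinearMap.apply ℝ ℝ v).hasFDerivAt.comp p hd).fderiv
  have h' : (fun q : ℝ × ℝ => fderiv ℝ (uncurry F) q v)
      = ⇑(ContinuousLinearMap.apply ℝ ℝ v) ∘ fderiv ℝ (uncurry F) := rfl
  rw [h', h]; rfl

lemma clairaut {F : ℝ → ℝ → ℝ} (hF : ContDiff ℝ (⊤ : ℕ∞) (uncurry F)) (t x : ℝ) :
    D2 (D1 F) t x = D1 (D2 F) t x := by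
  have h1 : uncurry (D1 F) = fun p : ℝ × ℝ => fderiv ℝ (uncurry F) p (1, 0) := by
    funext p; exact D1_eq hF p.1 p.2
  have h2 : uncurry (D2 F) = fun p : ℝ × ℝ => fderiv ℝ (uncurry F) p (0, 1) := by
    funext p; exact D2_eq hF p.1 p.2
  have e1 := D2_eq (D1_smooth hF) t x
  have e2 := D1_eq (D2_smooth hF) t x
  rw [h1] at e1; rw [h2] at e2
  rw [e1, e2, fderiv_applied hF _ _ _, fderiv_applied hF _ _ _]
  exact second_derivative_symmetric
    (fun y => ((hF.differentiable (by simp) y).hasFDerivAt))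
    (((hF.fderiv_right (by exact WithTop.coe_le_coe.mpr le_top)).differentiable one_ne_zero (t, x)).hasFDerivAt) _ _

lemma hasDerivAt_slice_x {F : ℝ → ℝ → ℝ} (hF : ContDiff ℝ (⊤ : ℕ∞) (uncurry F)) (t x : ℝ) :
    HasDerivAt (F t) (D2 F t x) x :=
  ((slice_x hF t).differentiable (by simp) x).hasDerivAt

lemma hasDerivAt_slice_t {F : ℝ → ℝ → ℝ} (hF : ContDiff ℝ (⊤ : ℕ∞) (uncurry F)) (t x : ℝ) :
    HasDerivAt (fun s => F s x) (D1 F t x) t :=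
  ((slice_t hF x).differentiable (by simp) t).hasDerivAt

theorem Q1_maps_solutions
    (f u : ℝ → ℝ → ℝ) (α : ℝ → ℝ)
    (hf : ContDiff ℝ (⊤ : ℕ∞) (Function.uncurry f))
    (hu : ContDiff ℝ (⊤ : ℕ∞) (Function.uncurry u))
    (hα : ContDiff ℝ (⊤ : ℕ∞) α)
    (hupos : ∀ t x, u t x > 0)
    (hKdV : ∀ t x, deriv (fun t' => f t' x) t + iteratedDeriv 3 (f t) x
        - 6 * f t x * deriv (f t) x = 0)
    (hSch : ∀ t x, iteratedDeriv 2 (u t) x = f t x * u t x)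
    (w : ℝ → ℝ → ℝ)
    (hw : ∀ t x, w t x = deriv (fun t' => u t' x) t + iteratedDeriv 3 (u t) x
        - 3 * iteratedDeriv 2 (u t) x * deriv (u t) x / u t x + α t * u t x) :
    ∀ t x, iteratedDeriv 2 (w t) x = f t x * w t x := by
  -- Schrödinger equation in D2 form
  have hSch2 : ∀ s y, D2 (D2 u) s y = f s y * u s y := by
    intro s y
    have : iteratedDeriv 2 (u s) y = D2 (D2 u) s y := by
      simp only [iteratedDeriv_succ, iteratedDeriv_zero]
      rfl
    rw [← this, hSch]
  -- third x-derivative of u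
  have hu3 : ∀ s y, iteratedDeriv 3 (u s) y = D2 f s y * u s y + f s y * D2 u s y := by
    intro s y
    have h2 : iteratedDeriv 2 (u s) = fun z => f s z * u s z := funext fun z => hSch s z
    have : iteratedDeriv 3 (u s) y = deriv (fun z => f s z * u s z) y := by
      rw [iteratedDeriv_succ, h2]
    rw [this]
    exact ((hasDerivAt_slice_x hf s y).mul (hasDerivAt_slice_x hu s y)).deriv
  -- simplified form of w
  have hwW : ∀ s, w s = fun y =>
      D1 u s y + D2 f s y * u s y - 2 * (f s y * D2 u s y) + α s * u s y := by
    intro s; funext y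
    rw [hw s y, hSch s y, hu3 s y]
    have hne : u s y ≠ 0 := (hupos s y).ne'
    have : deriv (fun t' => u t' y) s = D1 u s y := rfl
    have h2 : deriv (u s) y = D2 u s y := rfl
    rw [this, h2]
    field_simp
    ring
  -- first x-derivative of w
  have hW1 : ∀ s, deriv (w s) = fun y =>
      D1 (D2 u) s y + D2 (D2 f) s y * u s y - D2 f s y * D2 u s y
        - 2 * (f s y * (f s y * u s y)) + α s * D2 u s y := by
    intro s; funext y
    rw [hwW s]
    have H : HasDerivAt (fun z =>
        D1 u s z + D2 f s z * u s z - 2 * (f s z * D2 u s z) + α s * u s z)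
        (D2 (D1 u) s y
          + (D2 (D2 f) s y * u s y + D2 f s y * D2 u s y)
          - 2 * (D2 f s y * D2 u s y + f s y * D2 (D2 u) s y)
          + α s * D2 u s y) y := by
      exact (((hasDerivAt_slice_x (D1_smooth hu) s y).add
        ((hasDerivAt_slice_x (D2_smooth hf) s y).mul (hasDerivAt_slice_x hu s y))).sub
        (((hasDerivAt_slice_x hf s y).mul (hasDerivAt_slice_x (D2_smooth hu) s y)).const_mul 2)).add
        ((hasDerivAt_slice_x hu s y).const_mul (α s))
    rw [H.deriv, clairaut hu s y, hSch2 s y]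
    ring
  intro t x
  -- second x-derivative of w
  have H2 : HasDerivAt (fun y =>
      D1 (D2 u) t y + D2 (D2 f) t y * u t y - D2 f t y * D2 u t y
        - 2 * (f t y * (f t y * u t y)) + α t * D2 u t y)
      (D2 (D1 (D2 u)) t x
        + (D2 (D2 (D2 f)) t x * u t x + D2 (D2 f) t x * D2 u t x)
        - (D2 (D2 f) t x * D2 u t x + D2 f t x * D2 (D2 u) t x)
        - 2 * (D2 f t x * (f t x * u t x)
            + f t x * (D2 f t x * u t x + f t x * D2 u t x))
        + α t * D2 (D2 u) t x) x := by
    exact ((((hasDerivAt_slice_x (D1_smooth (D2_smooth hu)) t x).add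
      ((hasDerivAt_slice_x (D2_smooth (D2_smooth hf)) t x).mul (hasDerivAt_slice_x hu t x))).sub
      ((hasDerivAt_slice_x (D2_smooth hf) t x).mul (hasDerivAt_slice_x (D2_smooth hu) t x))).sub
      (((hasDerivAt_slice_x hf t x).mul
        ((hasDerivAt_slice_x hf t x).mul (hasDerivAt_slice_x hu t x))).const_mul 2)).add
      ((hasDerivAt_slice_x (D2_smooth hu) t x).const_mul (α t))
  have hiter : iteratedDeriv 2 (w t) x = deriv (deriv (w t)) x := by
    simp [iteratedDeriv_succ, iteratedDeriv_zero]
  rw [hiter, hW1 t, H2.deriv]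
  -- mixed partials: D2 (D1 (D2 u)) = D1 (D2 (D2 u)) = ∂_t (f u)
  have hmix : D2 (D1 (D2 u)) t x = D1 f t x * u t x + f t x * D1 u t x := by
    rw [clairaut (D2_smooth hu) t x]
    have : (fun s => D2 (D2 u) s x) = fun s => f s x * u s x := funext fun s => hSch2 s x
    have h : D1 (D2 (D2 u)) t x = deriv (fun s => f s x * u s x) t := by
      rw [D1, ← this]
    rw [h]
    exact ((hasDerivAt_slice_t hf t x).mul (hasDerivAt_slice_t hu t x)).deriv
  -- third x-derivative of f
  have hf3 : D2 (D2 (D2 f)) t x = iteratedDeriv 3 (f t) x := by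
    simp only [iteratedDeriv_succ, iteratedDeriv_zero]
    rfl
  have hkdv := hKdV t x
  have e1 : deriv (fun t' => f t' x) t = D1 f t x := rfl
  have e2 : deriv (f t) x = D2 f t x := rfl
  rw [e1, e2] at hkdv
  rw [hmix, hf3, hSch2 t x, hwW t]
  linear_combination (u t x) * hkdv
end
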